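/- arXiv:2407.08537 — 3 statements merged into one kernel-verified Lean document; each statement's English description precedes it below -/
import Mathlib

section
/- Let N, S, R_A, α_A > 0 with α_A < 1. Set α_B = 0, ε_m = 0, W^v = 0 and W^a = α_A·N/S. Then the bribery-fee threshold equals −4N·R_A·α_A / (S + N·(1 + α_A)), which is strictly negative; consequently, for every positive bribery fee ε_v > 0, the utility of accepting the bribe exceeds that of not accepting it: ((S·(1 + α_A·N/S) + N) / (2N·(1 − α_A)))·(R_A + ε_v) > ((S·(1 − α_A·N/S) + N·(1 − 2α_A)) / (2N·(1 − α_A)))·R_A. -/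
/-!
After clearing the `S` in `W^a = α_A·N/S`, both expected utilities share the positive
denominator `2N(1 − α_A)`, and the main chain's numerator is the bribery chain's numerator
`P = S + N(1 + α_A)` minus `4N·α_A`. Accepting the bribe is therefore preferable exactly when
`P·ε_v > −4N·α_A·R_A`, i.e. when `ε_v` exceeds the threshold `−4N·R_A·α_A / P`, which is negative.
-/

lemma mul_one_add_div_self {S a : ℝ} (hS : S ≠ 0) : S * (1 + a / S) = S + a := by
  rw [one_add_div hS, mul_div_cancel₀ _ hS]

lemma mul_one_sub_div_self {S a : ℝ} (hS : S ≠ 0) : S * (1 - a / S) = S - a := by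
  rw [one_sub_div hS, mul_div_cancel₀ _ hS]

lemma div_mul_add_gt_div_mul_iff {P Q D R ε : ℝ} (hP : 0 < P) (hD : 0 < D) :
    (P / D) * (R + ε) > (Q / D) * R ↔ -((P - Q) * R) / P < ε := by
  rw [gt_iff_lt, div_mul_eq_mul_div, div_mul_eq_mul_div, div_lt_div_iff_of_pos_right hD,
    div_lt_iff₀ hP]
  constructor <;> intro h <;> linarith

/-- With `α_B = 0`, `ε_m = 0`, `W^v = 0`, `W^a = α_A·N/S`, the
bribery-fee threshold equals `−4N·R_A·α_A/(S + N·(1 + α_A))`, which is negative;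
hence any positive bribery fee makes accepting the bribe strictly preferable. -/
theorem negligible_fee_suffices (N S RA αA : ℝ)
    (hN : 0 < N) (hS : 0 < S) (hRA : 0 < RA) (hαA0 : 0 < αA) (hαA1 : αA < 1) :
    (2 * S * RA * (0 - αA * N / S) - 2 * N * RA * αA) /
        (S * (1 - 0 + αA * N / S) + N) =
      -(4 * N * RA * αA) / (S + N * (1 + αA)) ∧
    -(4 * N * RA * αA) / (S + N * (1 + αA)) < 0 ∧
    ∀ εv : ℝ, 0 < εv →
      ((S * (1 + αA * N / S) + N) / (2 * N * (1 - αA))) * (RA + εv) >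
        ((S * (1 - αA * N / S) + N * (1 - 2 * αA)) / (2 * N * (1 - αA))) * RA := by
  have hS0 : S ≠ 0 := hS.ne'
  have hbribery : S * (1 + αA * N / S) + N = S + N * (1 + αA) := by
    rw [mul_one_add_div_self hS0]; ring
  have hmain : S * (1 - αA * N / S) + N * (1 - 2 * αA) = S + N * (1 + αA) - 4 * N * αA := by
    rw [mul_one_sub_div_self hS0]; ring
  have hP : 0 < S + N * (1 + αA) := by positivity
  have hthreshold_neg : -(4 * N * RA * αA) / (S + N * (1 + αA)) < 0 :=
    div_neg_of_neg_of_pos (neg_neg_of_pos (by positivity)) hP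
  refine ⟨?_, hthreshold_neg, fun εv hεv => ?_⟩
  · rw [sub_zero, hbribery]
    congr 1
    field_simp
    ring
  · have hD : 0 < 2 * N * (1 - αA) := by nlinarith
    rw [hbribery, hmain, div_mul_add_gt_div_mul_iff hP hD]
    calc -((S + N * (1 + αA) - (S + N * (1 + αA) - 4 * N * αA)) * RA) / (S + N * (1 + αA))
        = -(4 * N * RA * αA) / (S + N * (1 + αA)) := by ring
      _ < εv := hthreshold_neg.trans hεv
end

section
/- Let Q, Q' > 0 and 0 ≤ f < 1 be real numbers with Q'·(1 − f) > Q. Define the arbitrage profit function P(Δ) = Q'·(1 − f)·Δ / (Q + (1 − f)·Δ) − Δ for Δ ≥ 0, and set Δ* = (√(Q·Q'·(1 − f)) − Q) / (1 − f). Then Δ* > 0 and for every Δ ≥ 0, P(Δ) ≤ P(Δ*), with equality only when Δ = Δ*. -/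
/-!
Write `γ = 1 - f`, `u = Q + γΔ` for the pool's post-trade reserve of the input asset and
`s = √(Q Q' γ)`, so that `Q + γΔ* = s`. Eliminating `Δ = (u - Q)/γ` and `Q Q' = s²/γ` gives
`P(Δ*) - P(Δ) = (u - s)² / (γ u)`, a perfect square: this is AM-GM for `u + s²/u ≥ 2s`.
The arbitrage condition `Q < Q'γ` is exactly `Q < s`, i.e. `Δ* > 0`.
-/

/-- `γ = 1 - f` is the fee multiplier of the pool. -/
noncomputable def swapProfit (Q Q' γ Δ : ℝ) : ℝ := Q' * γ * Δ / (Q + γ * Δ) - Δ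

section swapProfit

variable {Q Q' γ s Δ : ℝ}

theorem swapProfit_sub_swapProfit (hγ : γ ≠ 0) (hs : s ≠ 0) (hs2 : s ^ 2 = Q * Q' * γ)
    (hu : Q + γ * Δ ≠ 0) :
    swapProfit Q Q' γ ((s - Q) / γ) - swapProfit Q Q' γ Δ =
      (Q + γ * Δ - s) ^ 2 / (γ * (Q + γ * Δ)) := by
  have hopt : Q + γ * ((s - Q) / γ) = s := by field_simp; ring
  unfold swapProfit
  rw [hopt]
  field_simp
  linear_combination (Q + γ * Δ - s) * hs2

theorem swapProfit_le_swapProfit_optimal (hγ : 0 < γ) (hs : 0 < s) (hs2 : s ^ 2 = Q * Q' * γ)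
    (hu : 0 < Q + γ * Δ) : swapProfit Q Q' γ Δ ≤ swapProfit Q Q' γ ((s - Q) / γ) := by
  have := swapProfit_sub_swapProfit hγ.ne' hs.ne' hs2 hu.ne'
  have : 0 ≤ (Q + γ * Δ - s) ^ 2 / (γ * (Q + γ * Δ)) := by positivity
  linarith

theorem eq_optimal_of_swapProfit_eq (hγ : 0 < γ) (hs : 0 < s) (hs2 : s ^ 2 = Q * Q' * γ)
    (hu : 0 < Q + γ * Δ) (h : swapProfit Q Q' γ Δ = swapProfit Q Q' γ ((s - Q) / γ)) :
    Δ = (s - Q) / γ := by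
  have hsq := swapProfit_sub_swapProfit hγ.ne' hs.ne' hs2 hu.ne'
  rw [h, sub_self, eq_comm, div_eq_zero_iff, pow_eq_zero_iff two_ne_zero] at hsq
  rcases hsq with hsq | hden
  · rw [eq_div_iff hγ.ne']; linarith
  · exact absurd hden (by positivity)

end swapProfit

theorem optimal_trading_amount_general (Q Q' f : ℝ)
    (hQ : 0 < Q) (hf1 : f < 1)
    (harb : Q < Q' * (1 - f))
    (P : ℝ → ℝ) (hP : ∀ Δ, P Δ = Q' * (1 - f) * Δ / (Q + (1 - f) * Δ) - Δ)
    (Δstar : ℝ) (hΔ : Δstar = (Real.sqrt (Q * Q' * (1 - f)) - Q) / (1 - f)) :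
    0 < Δstar ∧ ∀ Δ, 0 ≤ Δ → P Δ ≤ P Δstar ∧ (P Δ = P Δstar → Δ = Δstar) := by
  set s := Real.sqrt (Q * Q' * (1 - f))
  have hγ : 0 < 1 - f := by linarith
  have hQs : Q < s := Real.lt_sqrt_of_sq_lt (by nlinarith)
  have hs : 0 < s := hQ.trans hQs
  have hs2 : s ^ 2 = Q * Q' * (1 - f) := Real.sq_sqrt (by nlinarith)
  have hPeq : P = swapProfit Q Q' (1 - f) := funext hP
  subst hPeq hΔ
  refine ⟨div_pos (by linarith) hγ, fun Δ hΔ => ?_⟩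
  have hu : 0 < Q + (1 - f) * Δ := by positivity
  exact ⟨swapProfit_le_swapProfit_optimal hγ hs hs2 hu, eq_optimal_of_swapProfit_eq hγ hs hs2 hu⟩

/-- For a constant product AMM virtual pool with an arbitrage
opportunity (`Q'·(1 − f) > Q`), the trading amount
`Δ* = (√(Q·Q'·(1 − f)) − Q)/(1 − f)` is positive and uniquely maximizes the
arbitrage profit `P(Δ) = Q'·(1 − f)·Δ/(Q + (1 − f)·Δ) − Δ` over `Δ ≥ 0`. -/
theorem optimal_trading_amount (Q Q' f : ℝ)
    (hQ : 0 < Q) (hQ' : 0 < Q') (hf0 : 0 ≤ f) (hf1 : f < 1)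
    (harb : Q < Q' * (1 - f))
    (P : ℝ → ℝ) (hP : ∀ Δ, P Δ = Q' * (1 - f) * Δ / (Q + (1 - f) * Δ) - Δ)
    (Δstar : ℝ) (hΔ : Δstar = (Real.sqrt (Q * Q' * (1 - f)) - Q) / (1 - f)) :
    0 < Δstar ∧ ∀ Δ, 0 ≤ Δ → P Δ ≤ P Δstar ∧ (P Δ = P Δstar → Δ = Δstar) :=
  optimal_trading_amount_general Q Q' f hQ hf1 harb P hP Δstar hΔ
end

section
/- Let a, b, c, d > 0 and 0 ≤ f < 1 be real numbers, and define the swap output functions g(x) = b·(1 − f)·x / (a + (1 − f)·x) and h(y) = d·(1 − f)·y / (c + (1 − f)·y). Then for every x ≥ 0, h(g(x)) = D·(1 − f)·x / (C + (1 − f)·x), where C = a·c / (c + b·(1 − f)) and D = (1 − f)·b·d / (c + b·(1 − f)). -/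
/-! Selling `y = g x` into the second pool gives
`c + (1 - f) y = (a c + (c + b (1 - f)) (1 - f) x) / (a + (1 - f) x)`; up to the factor
`c + b (1 - f)` this numerator is `C + (1 - f) x`, so `h (g x)` collapses to the
constant-product form with reserves `(C, D)`. -/

def cpmmOut {K : Type*} [Field K] (a b f x : K) : K :=
  b * (1 - f) * x / (a + (1 - f) * x)

theorem cpmmOut_comp {K : Type*} [Field K] {a b c d f x : K}
    (hx : a + (1 - f) * x ≠ 0) (hbc : c + b * (1 - f) ≠ 0) :
    cpmmOut c d f (cpmmOut a b f x) =
      cpmmOut (a * c / (c + b * (1 - f))) ((1 - f) * b * d / (c + b * (1 - f))) f x := by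
  unfold cpmmOut
  have hden : c + (1 - f) * (b * (1 - f) * x / (a + (1 - f) * x)) =
      (a * c / (c + b * (1 - f)) + (1 - f) * x) * (c + b * (1 - f)) / (a + (1 - f) * x) := by
    rw [add_mul, div_mul_cancel₀ _ hbc]
    field_simp
    ring
  rw [hden]
  -- When the common denominator vanishes, both sides are the junk value `0`.
  by_cases hC : a * c / (c + b * (1 - f)) + (1 - f) * x = 0
  · simp [hC]
  · field_simp

theorem virtual_pool_composition_general (a b c d f : ℝ)
    (ha : 0 < a) (hb : 0 < b) (hc : 0 < c)
    (hf1 : f < 1)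
    (g h : ℝ → ℝ)
    (hg : ∀ x, g x = b * (1 - f) * x / (a + (1 - f) * x))
    (hh : ∀ y, h y = d * (1 - f) * y / (c + (1 - f) * y))
    (C D : ℝ)
    (hC : C = a * c / (c + b * (1 - f)))
    (hD : D = (1 - f) * b * d / (c + b * (1 - f))) :
    ∀ x, 0 ≤ x → h (g x) = D * (1 - f) * x / (C + (1 - f) * x) := by
  intro x hx
  obtain rfl : g = cpmmOut a b f := funext hg
  obtain rfl : h = cpmmOut c d f := funext hh
  have hfee : 0 < 1 - f := sub_pos.2 hf1
  subst hC hD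
  exact cpmmOut_comp (add_pos_of_pos_of_nonneg ha (mul_nonneg hfee.le hx)).ne'
    (add_pos hc (mul_pos hb hfee)).ne'

/-- Composing two constant product AMM swap functions along a
trading path yields a single virtual constant product pool with reserves
`C = a·c/(c + b·(1 − f))` and `D = (1 − f)·b·d/(c + b·(1 − f))`. -/
theorem virtual_pool_composition (a b c d f : ℝ)
    (ha : 0 < a) (hb : 0 < b) (hc : 0 < c) (hd : 0 < d)
    (hf0 : 0 ≤ f) (hf1 : f < 1)
    (g h : ℝ → ℝ)
    (hg : ∀ x, g x = b * (1 - f) * x / (a + (1 - f) * x))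
    (hh : ∀ y, h y = d * (1 - f) * y / (c + (1 - f) * y))
    (C D : ℝ)
    (hC : C = a * c / (c + b * (1 - f)))
    (hD : D = (1 - f) * b * d / (c + b * (1 - f))) :
    ∀ x, 0 ≤ x → h (g x) = D * (1 - f) * x / (C + (1 - f) * x) :=
  virtual_pool_composition_general a b c d f ha hb hc hf1 g h hg hh C D hC hD
end
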